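/- arXiv:2404.13157 — 2 statements merged into one kernel-verified Lean document; each statement's English description precedes it below -/
import Mathlib

section
/- Let (X, Σ, μ) be a complete measure space of finite measure admitting a lower density λ : Σ → Σ. Then there exists a lifting on (X, Σ, μ): a map Λ : Σ → Σ that preserves the ambient space, the empty set, finite intersections and finite unions, is an almost-everywhere identity (μ(Λ(Q) Δ Q) = 0 for all Q ∈ Σ), and strongly preserves the measure class (μ(Q Δ R) = 0 implies Λ(Q) = Λ(R)). -/
/-!
At each point `x` the sets `Q` with `x ∈ λ Q` form a filter base of nonempty sets; extend it to an
ultrafilter `𝒰 x` and put `Λ Q = {x | Q ∈ 𝒰 x}`. Ultrafilters make `Λ` preserve finite unions and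
intersections. Complements of null sets have lower density `X`, so they lie in every `𝒰 x`, which
makes `Λ` insensitive to null modifications. Finally `λ Q ⊆ Λ Q ⊆ (λ Qᶜ)ᶜ`, and both bounds agree
with `Q` almost everywhere; completeness then makes `Λ Q` measurable.
-/

open MeasureTheory Set Filter
open scoped symmDiff

section

variable {X : Type*} [MeasurableSpace X]

structure IsLowerDensity (μ : Measure X) (lam : Set X → Set X) : Prop where
  measurableSet_apply : ∀ Q, MeasurableSet Q → MeasurableSet (lam Q)
  apply_univ : lam univ = univ
  apply_empty : lam ∅ = ∅
  apply_inter : ∀ Q R, MeasurableSet Q → MeasurableSet R → lam (Q ∩ R) = lam Q ∩ lam R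
  measure_symmDiff_apply_eq_zero : ∀ Q, MeasurableSet Q → μ (lam Q ∆ Q) = 0
  apply_congr : ∀ Q R, MeasurableSet Q → MeasurableSet R → μ (Q ∆ R) = 0 → lam Q = lam R

structure IsLifting (μ : Measure X) (Λ : Set X → Set X) : Prop extends IsLowerDensity μ Λ where
  apply_union : ∀ Q R, MeasurableSet Q → MeasurableSet R → Λ (Q ∪ R) = Λ Q ∪ Λ R

theorem ae_eq_of_subset_of_subset {μ : Measure X} {s t u v : Set X} (hst : s ⊆ t) (htu : t ⊆ u)
    (hs : s =ᵐ[μ] v) (hu : u =ᵐ[μ] v) : t =ᵐ[μ] v :=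
  (htu.eventuallyLE.trans hu.le).antisymm (hs.symm.le.trans hst.eventuallyLE)

namespace IsLowerDensity

variable {μ : Measure X} {lam : Set X → Set X} (h : IsLowerDensity μ lam)
include h

theorem ae_eq {Q : Set X} (hQ : MeasurableSet Q) : lam Q =ᵐ[μ] Q :=
  measure_symmDiff_eq_zero_iff.mp (h.measure_symmDiff_apply_eq_zero Q hQ)

theorem apply_compl_of_measure_eq_zero {N : Set X} (hN : MeasurableSet N) (hN0 : μ N = 0) :
    lam Nᶜ = univ := by
  rw [← h.apply_univ]
  exact h.apply_congr _ _ hN.compl .univ (by simpa using hN0)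

def filterAt (x : X) : Filter X where
  sets := {S | ∃ Q, MeasurableSet Q ∧ x ∈ lam Q ∧ Q ⊆ S}
  univ_sets := ⟨univ, .univ, by simp [h.apply_univ], subset_rfl⟩
  sets_of_superset := fun ⟨Q, hQ, hxQ, hQS⟩ hST => ⟨Q, hQ, hxQ, hQS.trans hST⟩
  inter_sets := fun ⟨Q, hQ, hxQ, hQS⟩ ⟨R, hR, hxR, hRT⟩ =>
    ⟨Q ∩ R, hQ.inter hR, by rw [h.apply_inter Q R hQ hR]; exact ⟨hxQ, hxR⟩,
      inter_subset_inter hQS hRT⟩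

instance filterAt_neBot (x : X) : (h.filterAt x).NeBot := by
  refine ⟨fun hbot => ?_⟩
  obtain ⟨Q, -, hxQ, hQ⟩ := (h.filterAt x).empty_mem_iff_bot.mpr hbot
  rw [subset_empty_iff.mp hQ, h.apply_empty] at hxQ
  exact hxQ

noncomputable def ultrafilterAt (x : X) : Ultrafilter X := .of (h.filterAt x)

theorem mem_ultrafilterAt {Q : Set X} {x : X} (hQ : MeasurableSet Q) (hx : x ∈ lam Q) :
    Q ∈ h.ultrafilterAt x :=
  Ultrafilter.of_le (h.filterAt x) ⟨Q, hQ, hx, subset_rfl⟩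

def lifting (Q : Set X) : Set X := {x | Q ∈ h.ultrafilterAt x}

theorem subset_lifting {Q : Set X} (hQ : MeasurableSet Q) : lam Q ⊆ h.lifting Q :=
  fun _ hx => h.mem_ultrafilterAt hQ hx

theorem lifting_subset {Q : Set X} (hQ : MeasurableSet Q) : h.lifting Q ⊆ (lam Qᶜ)ᶜ :=
  fun _ hxQ hxQc => Ultrafilter.compl_notMem_iff.mpr hxQ (h.mem_ultrafilterAt hQ.compl hxQc)

theorem lifting_mono_ae {Q R : Set X} (hQ : MeasurableSet Q) (hR : MeasurableSet R)
    (hQR : Q ≤ᵐ[μ] R) : h.lifting Q ⊆ h.lifting R := fun x hxQ => by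
  have hQR_compl : (Q \ R)ᶜ ∈ h.ultrafilterAt x :=
    h.mem_ultrafilterAt (hQ.diff hR).compl
      (by rw [h.apply_compl_of_measure_eq_zero (hQ.diff hR) (ae_le_set.mp hQR)]; trivial)
  have hQ_inter_R : Q ∩ R ∈ h.ultrafilterAt x := by
    simpa only [sdiff_sdiff_right_self, Ultrafilter.mem_coe] using sdiff_mem hxQ hQR_compl
  exact mem_of_superset hQ_inter_R inter_subset_right

theorem lifting_ae_eq {Q : Set X} (hQ : MeasurableSet Q) : h.lifting Q =ᵐ[μ] Q :=
  ae_eq_of_subset_of_subset (h.subset_lifting hQ) (h.lifting_subset hQ) (h.ae_eq hQ)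
    (by simpa using (h.ae_eq hQ.compl).compl)

theorem isLifting_lifting [μ.IsComplete] : IsLifting μ h.lifting where
  measurableSet_apply _ hQ :=
    (hQ.nullMeasurableSet.congr (h.lifting_ae_eq hQ).symm).measurable_of_complete
  apply_univ := eq_univ_of_forall fun _ => univ_mem
  apply_empty := eq_empty_of_forall_notMem fun _ => Ultrafilter.empty_notMem
  apply_inter _ _ _ _ := ext fun _ => inter_mem_iff
  apply_union _ _ _ _ := ext fun _ => Ultrafilter.union_mem_iff
  measure_symmDiff_apply_eq_zero _ hQ := measure_symmDiff_eq_zero_iff.mpr (h.lifting_ae_eq hQ)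
  apply_congr Q R hQ hR hQR :=
    have hQR : Q =ᵐ[μ] R := measure_symmDiff_eq_zero_iff.mp hQR
    (h.lifting_mono_ae hQ hR hQR.le).antisymm (h.lifting_mono_ae hR hQ hQR.symm.le)

end IsLowerDensity

end

theorem exists_lifting_of_lowerDensity_general
    {X : Type*} [MeasurableSpace X] (μ : Measure X)
    (hcomp : μ.IsComplete)
    (lam : Set X → Set X)
    (hmeas : ∀ Q : Set X, MeasurableSet Q → MeasurableSet (lam Q))
    (hpas : lam Set.univ = Set.univ)
    (hpes : lam (∅ : Set X) = ∅)
    (hpfi : ∀ Q R : Set X, MeasurableSet Q → MeasurableSet R →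
      lam (Q ∩ R) = lam Q ∩ lam R)
    (haei : ∀ Q : Set X, MeasurableSet Q → μ (symmDiff (lam Q) Q) = 0)
    (hspmc : ∀ Q R : Set X, MeasurableSet Q → MeasurableSet R →
      μ (symmDiff Q R) = 0 → lam Q = lam R) :
    ∃ Λ : Set X → Set X,
      (∀ Q : Set X, MeasurableSet Q → MeasurableSet (Λ Q)) ∧
      Λ Set.univ = Set.univ ∧
      Λ (∅ : Set X) = ∅ ∧
      (∀ Q R : Set X, MeasurableSet Q → MeasurableSet R →
        Λ (Q ∩ R) = Λ Q ∩ Λ R) ∧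
      (∀ Q R : Set X, MeasurableSet Q → MeasurableSet R →
        Λ (Q ∪ R) = Λ Q ∪ Λ R) ∧
      (∀ Q : Set X, MeasurableSet Q → μ (symmDiff (Λ Q) Q) = 0) ∧
      (∀ Q R : Set X, MeasurableSet Q → MeasurableSet R →
        μ (symmDiff Q R) = 0 → Λ Q = Λ R) := by
  have hlam : IsLowerDensity μ lam := ⟨hmeas, hpas, hpes, hpfi, haei, hspmc⟩
  obtain ⟨⟨h₁, h₂, h₃, h₄, h₆, h₇⟩, h₅⟩ := hlam.isLifting_lifting
  exact ⟨hlam.lifting, h₁, h₂, h₃, h₄, h₅, h₆, h₇⟩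

theorem exists_lifting_of_lowerDensity
    {X : Type*} [MeasurableSpace X] (μ : Measure X)
    [IsFiniteMeasure μ] (hcomp : μ.IsComplete)
    (lam : Set X → Set X)
    (hmeas : ∀ Q : Set X, MeasurableSet Q → MeasurableSet (lam Q))
    (hpas : lam Set.univ = Set.univ)
    (hpes : lam (∅ : Set X) = ∅)
    (hpfi : ∀ Q R : Set X, MeasurableSet Q → MeasurableSet R →
      lam (Q ∩ R) = lam Q ∩ lam R)
    (haei : ∀ Q : Set X, MeasurableSet Q → μ (symmDiff (lam Q) Q) = 0)
    (hspmc : ∀ Q R : Set X, MeasurableSet Q → MeasurableSet R →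
      μ (symmDiff Q R) = 0 → lam Q = lam R) :
    ∃ Λ : Set X → Set X,
      (∀ Q : Set X, MeasurableSet Q → MeasurableSet (Λ Q)) ∧
      Λ Set.univ = Set.univ ∧
      Λ (∅ : Set X) = ∅ ∧
      (∀ Q R : Set X, MeasurableSet Q → MeasurableSet R →
        Λ (Q ∩ R) = Λ Q ∩ Λ R) ∧
      (∀ Q R : Set X, MeasurableSet Q → MeasurableSet R →
        Λ (Q ∪ R) = Λ Q ∪ Λ R) ∧
      (∀ Q : Set X, MeasurableSet Q → μ (symmDiff (Λ Q) Q) = 0) ∧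
      (∀ Q R : Set X, MeasurableSet Q → MeasurableSet R →
        μ (symmDiff Q R) = 0 → Λ Q = Λ R) :=
  exists_lifting_of_lowerDensity_general μ hcomp lam hmeas hpas hpes hpfi haei hspmc
end

section
/- Let λ be a lifting on a complete measure space (X, Σ, μ) of finite measure, and let N be the set of points x ∈ X such that no set Q with Q = λ(Q), μ(Q) > 0 contains x in λ(Q). Then N is a null set (its outer measure is zero). -/
/-!
Let `Q` be a measurable hull of the exceptional set `N`. If `μ Q = 0` there is nothing to prove.
Otherwise `λ Q` is a fixed point of `λ` (it is a.e. equal to `Q`) of positive measure, so by the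
definition of `N` no point of `N` lies in `λ Q`; hence `N ⊆ Q \ λ Q`, which is null.
-/

open MeasureTheory

section Lifting

variable {X : Type*} [MeasurableSpace X] {μ : Measure X} {lam : Set X → Set X} {Q : Set X}

theorem lifting_lifting_eq
    (hmeas : ∀ Q : Set X, MeasurableSet Q → MeasurableSet (lam Q))
    (haei : ∀ Q : Set X, MeasurableSet Q → μ (symmDiff (lam Q) Q) = 0)
    (hspmc : ∀ Q R : Set X, MeasurableSet Q → MeasurableSet R →
      μ (symmDiff Q R) = 0 → lam Q = lam R)
    (hQ : MeasurableSet Q) : lam (lam Q) = lam Q :=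
  hspmc _ _ (hmeas Q hQ) hQ (haei Q hQ)

theorem measure_lifting_eq (haei : ∀ Q : Set X, MeasurableSet Q → μ (symmDiff (lam Q) Q) = 0)
    (hQ : MeasurableSet Q) : μ (lam Q) = μ Q :=
  measure_congr (measure_symmDiff_eq_zero_iff.mp (haei Q hQ))

theorem measure_eq_zero_of_subset_of_disjoint_lifting
    (haei : ∀ Q : Set X, MeasurableSet Q → μ (symmDiff (lam Q) Q) = 0)
    {N : Set X} (hQ : MeasurableSet Q) (hNQ : N ⊆ Q) (hdisj : Disjoint N (lam Q)) : μ N = 0 :=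
  measure_mono_null (fun _ hx => Or.inr ⟨hNQ hx, Set.disjoint_left.mp hdisj hx⟩) (haei Q hQ)

end Lifting

theorem lifting_exceptional_set_null_general
    {X : Type*} [MeasurableSpace X] (μ : Measure X)
    (lam : Set X → Set X)
    (hmeas : ∀ Q : Set X, MeasurableSet Q → MeasurableSet (lam Q))
    (haei : ∀ Q : Set X, MeasurableSet Q → μ (symmDiff (lam Q) Q) = 0)
    (hspmc : ∀ Q R : Set X, MeasurableSet Q → MeasurableSet R →
      μ (symmDiff Q R) = 0 → lam Q = lam R) :
    μ.toOuterMeasure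
      {x : X | ∀ Q : Set X, MeasurableSet Q → Q = lam Q → 0 < μ Q → x ∉ lam Q} = 0 := by
  set N := {x : X | ∀ Q : Set X, MeasurableSet Q → Q = lam Q → 0 < μ Q → x ∉ lam Q}
  change μ N = 0
  have hQ : MeasurableSet (toMeasurable μ N) := measurableSet_toMeasurable μ N
  rcases eq_zero_or_pos (μ (toMeasurable μ N)) with hnull | hpos
  · exact measure_mono_null (subset_toMeasurable μ N) hnull
  have hfix := lifting_lifting_eq hmeas haei hspmc hQ
  have hpos' : 0 < μ (lam (toMeasurable μ N)) := (measure_lifting_eq haei hQ).symm ▸ hpos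
  refine measure_eq_zero_of_subset_of_disjoint_lifting haei hQ (subset_toMeasurable μ N) ?_
  exact Set.disjoint_left.mpr fun x hx => hfix ▸ hx _ (hmeas _ hQ) hfix.symm hpos'

theorem lifting_exceptional_set_null
    {X : Type*} [MeasurableSpace X] (μ : Measure X)
    [IsFiniteMeasure μ] (hcomp : μ.IsComplete)
    (lam : Set X → Set X)
    (hmeas : ∀ Q : Set X, MeasurableSet Q → MeasurableSet (lam Q))
    (hpas : lam Set.univ = Set.univ)
    (hpes : lam (∅ : Set X) = ∅)
    (hpfi : ∀ Q R : Set X, MeasurableSet Q → MeasurableSet R →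
      lam (Q ∩ R) = lam Q ∩ lam R)
    (hpfu : ∀ Q R : Set X, MeasurableSet Q → MeasurableSet R →
      lam (Q ∪ R) = lam Q ∪ lam R)
    (haei : ∀ Q : Set X, MeasurableSet Q → μ (symmDiff (lam Q) Q) = 0)
    (hspmc : ∀ Q R : Set X, MeasurableSet Q → MeasurableSet R →
      μ (symmDiff Q R) = 0 → lam Q = lam R) :
    μ.toOuterMeasure
      {x : X | ∀ Q : Set X, MeasurableSet Q → Q = lam Q → 0 < μ Q → x ∉ lam Q} = 0 :=
  lifting_exceptional_set_null_general μ lam hmeas haei hspmc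
end
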